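/- Every zero-median solution (x_1, …, x_N) of the MIW recursion is antisymmetric: x_n = −x_{N+1−n} for all n = 1, …, N. -/
import Mathlib


noncomputable section

/-- Partial sums `S_n = x_1 + ⋯ + x_n`. -/
def Ssum (x : ℕ → ℝ) (n : ℕ) : ℝ := ∑ i ∈ Finset.Icc 1 n, x i

/-- `x` is a solution of the MIW recursion
`x_{n+1} = x_n - 1/(x_1 + ⋯ + x_n)` for `1 ≤ n ≤ N - 1`. -/
def IsMIW (N : ℕ) (x : ℕ → ℝ) : Prop :=
  ∀ n, 1 ≤ n → n ≤ N - 1 → Ssum x n ≠ 0 ∧ x (n + 1) = x n - 1 / Ssum x n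

/-- Zero-median: `x_m = 0` if `N` is odd and `x_m = -x_{m+1}` if `N` is even,
where `m = (N+1)/2` if `N` is odd and `m = N/2` if `N` is even. -/
def ZeroMedian (N : ℕ) (x : ℕ → ℝ) : Prop :=
  if N % 2 = 1 then x ((N + 1) / 2) = 0 else x (N / 2) = -x (N / 2 + 1)

lemma Ssum_split (x : ℕ → ℝ) (a b : ℕ) (h : a ≤ b) :
    Ssum x b = Ssum x a + ∑ i ∈ Finset.Icc (a + 1) b, x i := by
  have h1 : Finset.Icc 1 b = Finset.Icc 1 a ∪ Finset.Icc (a + 1) b := by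
    ext i; simp [Finset.mem_Icc, Finset.mem_union]; omega
  have h2 : Disjoint (Finset.Icc 1 a) (Finset.Icc (a + 1) b) := by
    rw [Finset.disjoint_left]; intro i hi hi'
    simp [Finset.mem_Icc] at hi hi'; omega
  rw [Ssum, h1, Finset.sum_union h2]; rfl

lemma key (N : ℕ) (hN : 2 ≤ N) (x : ℕ → ℝ)
    (hMIW : IsMIW N x) (hmed : ZeroMedian N x) :
    ∀ d j, 1 ≤ j → 2 * j ≤ N + 1 → (N + 1) / 2 - j ≤ d → x j = -x (N + 1 - j) := by
  intro d
  induction d with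
  | zero =>
    intro j hj1 hj2 hd
    have hj : j = (N + 1) / 2 := by omega
    unfold ZeroMedian at hmed
    rcases Nat.even_or_odd N with he | ho
    · have hm : N % 2 = 0 := Nat.even_iff.mp he
      rw [if_neg (by omega)] at hmed
      have e1 : j = N / 2 := by omega
      have e2 : N + 1 - j = N / 2 + 1 := by omega
      rw [e2, e1]; exact hmed
    · have hm : N % 2 = 1 := Nat.odd_iff.mp ho
      rw [if_pos hm] at hmed
      have e2 : N + 1 - j = j := by omega
      rw [e2, hj, hmed]; ring
  | succ d ih =>
    intro j hj1 hj2 hd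
    by_cases hcase : (N + 1) / 2 - j ≤ d
    · exact ih j hj1 hj2 hcase
    · have hlt : j < (N + 1) / 2 := by omega
      have hj2' : 2 * (j + 1) ≤ N + 1 := by omega
      -- antisymmetry for all indices in the inner block
      have hpair : ∀ i, j + 1 ≤ i → i ≤ N - j → x i = -x (N + 1 - i) := by
        intro i hi1 hi2
        by_cases h2i : 2 * i ≤ N + 1
        · exact ih i (by omega) h2i (by omega)
        · have hi' := ih (N + 1 - i) (by omega) (by omega) (by omega)
          have e : N + 1 - (N + 1 - i) = i := by omega
          rw [e] at hi'
          linarith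
      -- the inner block sums to zero
      have hsum0 : ∑ i ∈ Finset.Icc (j + 1) (N - j), x i = 0 := by
        have hre : ∑ i ∈ Finset.Icc (j + 1) (N - j), x (N + 1 - i)
            = ∑ i ∈ Finset.Icc (j + 1) (N - j), x i := by
          apply Finset.sum_nbij' (fun i => N + 1 - i) (fun i => N + 1 - i) <;>
            intro a ha <;> simp [Finset.mem_Icc] at ha ⊢ <;> omega
        have h1 : ∑ i ∈ Finset.Icc (j + 1) (N - j), x i
            = ∑ i ∈ Finset.Icc (j + 1) (N - j), -x (N + 1 - i) := by
          apply Finset.sum_congr rfl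
          intro i hi
          simp [Finset.mem_Icc] at hi
          exact hpair i hi.1 hi.2
        rw [Finset.sum_neg_distrib, hre] at h1
        linarith
      have hSeq : Ssum x (N - j) = Ssum x j := by
        have := Ssum_split x j (N - j) (by omega)
        rw [hsum0] at this; linarith
      -- recursion at j and at N - j
      obtain ⟨hS1, hr1⟩ := hMIW j hj1 (by omega)
      obtain ⟨hS2, hr2⟩ := hMIW (N - j) (by omega) (by omega)
      have hmid : x (j + 1) = -x (N - j) := by
        have := hpair (j + 1) le_rfl (by omega)
        have e : N + 1 - (j + 1) = N - j := by omega
        rwa [e] at this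
      have e1 : N - j + 1 = N + 1 - j := by omega
      rw [e1] at hr2
      rw [hSeq] at hr2
      rw [hr2]
      linarith
theorem zeroMedian_antisymmetric (N : ℕ) (hN : 2 ≤ N) (x : ℕ → ℝ)
    (hMIW : IsMIW N x) (hmed : ZeroMedian N x) :
    ∀ n, 1 ≤ n → n ≤ N → x n = -x (N + 1 - n) := by
  intro n hn1 hn2
  by_cases h : 2 * n ≤ N + 1
  · exact key N hN x hMIW hmed ((N + 1) / 2) n hn1 h (by omega)
  · have h' := key N hN x hMIW hmed ((N + 1) / 2) (N + 1 - n) (by omega) (by omega) (by omega)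
    have e : N + 1 - (N + 1 - n) = n := by omega
    rw [e] at h'
    linarith
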